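/- Let 0 < α < 1. Then for every integer N ≥ 1, the partial sum Σ_{k=0}^{N} ω_k^{(α)} > 0. -/

import Mathlib

open Finset

/-- The coefficients `g_k^{(γ)}`: `g_0 = 1`, `g_k = (1 - (γ+1)/k) g_{k-1}` for `k ≥ 1`. -/
noncomputable def gcoef (γ : ℝ) : ℕ → ℝ
  | 0 => 1
  | k + 1 => (1 - (γ + 1) / (k + 1)) * gcoef γ k

/-- The coefficients `ω_k^{(γ)}`: `ω_0 = (γ/2) g_0` and
`ω_k = (γ/2) g_k + ((2-γ)/2) g_{k-1}` for `k ≥ 1`. -/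
noncomputable def wcoef (γ : ℝ) : ℕ → ℝ
  | 0 => γ / 2 * gcoef γ 0
  | k + 1 => γ / 2 * gcoef γ (k + 1) + (2 - γ) / 2 * gcoef γ k

/-!
Since `g_k^{(γ)} = (-1)^k binom(γ, k)`, the partial sums of the `g_k^{(γ)}` are
`∑_{k ≤ n} g_k^{(γ)} = g_n^{(γ-1)}`. Hence `∑_{k ≤ N} ω_k^{(α)} = (α/2) g_N^{(α-1)} + ((2-α)/2) g_{N-1}^{(α-1)}`,
and for `α < 1` every factor `1 - α/k` of `g_n^{(α-1)}` is positive.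
-/

@[simp] lemma gcoef_zero (γ : ℝ) : gcoef γ 0 = 1 := rfl

lemma gcoef_succ (γ : ℝ) (k : ℕ) :
    gcoef γ (k + 1) = (1 - (γ + 1) / ((k : ℝ) + 1)) * gcoef γ k := rfl

lemma gcoef_pos {γ : ℝ} (hγ : γ < 0) (k : ℕ) : 0 < gcoef γ k := by
  induction k with
  | zero => simp
  | succ k ih =>
    have hfactor : 0 < 1 - (γ + 1) / ((k : ℝ) + 1) := by
      rw [sub_pos, div_lt_one (by positivity)]
      linarith [(k.cast_nonneg : (0 : ℝ) ≤ k)]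
    rw [gcoef_succ]
    exact mul_pos hfactor ih

lemma gcoef_succ_eq_neg_div_mul_gcoef_sub_one (γ : ℝ) (k : ℕ) :
    gcoef γ (k + 1) = -γ / ((k : ℝ) + 1) * gcoef (γ - 1) k := by
  induction k with
  | zero => simp [gcoef_succ]
  | succ k ih =>
    rw [gcoef_succ, ih, gcoef_succ]
    push_cast
    field_simp
    ring

lemma sum_range_gcoef (γ : ℝ) (n : ℕ) :
    ∑ k ∈ range (n + 1), gcoef γ k = gcoef (γ - 1) n := by
  induction n with
  | zero => simp
  | succ n ih =>
    rw [sum_range_succ, ih, gcoef_succ_eq_neg_div_mul_gcoef_sub_one, gcoef_succ (γ - 1)]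
    ring

lemma sum_range_wcoef (γ : ℝ) (N : ℕ) :
    ∑ k ∈ range (N + 2), wcoef γ k
      = γ / 2 * gcoef (γ - 1) (N + 1) + (2 - γ) / 2 * gcoef (γ - 1) N := by
  have hsplit : ∑ k ∈ range (N + 2), wcoef γ k
      = γ / 2 * ∑ k ∈ range (N + 2), gcoef γ k + (2 - γ) / 2 * ∑ k ∈ range (N + 1), gcoef γ k := by
    rw [sum_range_succ' (wcoef γ), sum_range_succ' (gcoef γ) (N + 1)]
    simp only [wcoef, sum_add_distrib, ← mul_sum]
    ring
  rw [hsplit, sum_range_gcoef, sum_range_gcoef]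

theorem stmt4 (α : ℝ) (hα0 : 0 < α) (hα1 : α < 1) :
    ∀ N : ℕ, 1 ≤ N → 0 < ∑ k ∈ Finset.range (N + 1), wcoef α k := by
  intro N hN
  obtain ⟨M, rfl⟩ := Nat.exists_eq_add_of_le' hN
  rw [sum_range_wcoef]
  have hg₀ := gcoef_pos (sub_neg.mpr hα1) M
  have hg₁ := gcoef_pos (sub_neg.mpr hα1) (M + 1)
  have : 0 < 2 - α := by linarith
  positivity
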